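/- For 0 < α < 1 and any natural number N, the partial sum ∑_{k=0}^{N} C(α,k)·(1 − 2k) is strictly positive; consequently ∑_{k=0}^{N} C(α,k) > 2·∑_{k=0}^{N} C(α,k)·k. -/
import Mathlib


/-- Generalized binomial coefficient `C(α, k) = α(α−1)⋯(α−k+1)/k!` for real `α`. -/
noncomputable def genBinom (α : ℝ) (k : ℕ) : ℝ :=
  (∏ i ∈ Finset.range k, (α - i)) / (Nat.factorial k)

lemma genBinom_zero (α : ℝ) : genBinom α 0 = 1 := by simp [genBinom]

lemma genBinom_one (α : ℝ) : genBinom α 1 = α := by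
  simp [genBinom]

lemma genBinom_succ (α : ℝ) (k : ℕ) :
    genBinom α (k+1) * ((k : ℝ)+1) = genBinom α k * (α - k) := by
  have h1 : (Nat.factorial k : ℝ) ≠ 0 := by positivity
  have h2 : ((k:ℝ)+1) ≠ 0 := by positivity
  simp only [genBinom, Finset.prod_range_succ, Nat.factorial_succ, Nat.cast_mul,
    Nat.cast_add, Nat.cast_one]
  field_simp

lemma genBinom_succ' (α : ℝ) (k : ℕ) :
    genBinom α (k+1) = genBinom α k * (α - k) / ((k : ℝ)+1) := by
  have h2 : ((k:ℝ)+1) ≠ 0 := by positivity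
  rw [eq_div_iff h2]
  exact genBinom_succ α k

/-- sign: `(-1)^k C(α,k+1) > 0` for `0 < α < 1`. -/
lemma genBinom_sign (α : ℝ) (h0 : 0 < α) (h1 : α < 1) :
    ∀ k : ℕ, 0 < (-1:ℝ)^k * genBinom α (k+1) := by
  intro k
  induction k with
  | zero => simpa [genBinom_one] using h0
  | succ k ih =>
    have h := genBinom_succ' α (k+1)
    rw [h]
    push_cast
    have hk : (0:ℝ) < (k:ℝ) + 2 := by positivity
    have hfac : (0:ℝ) < ((k:ℝ) + 1 - α) := by nlinarith [Nat.cast_nonneg (α := ℝ) k]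
    have : (-1:ℝ)^(k+1) * (genBinom α (k+1) * (α - ((k:ℝ)+1)) / ((k:ℝ)+1+1))
        = ((-1:ℝ)^k * genBinom α (k+1)) * (((k:ℝ)+1-α) / ((k:ℝ)+2)) := by
      rw [pow_succ]; ring
    rw [this]
    positivity

/-- magnitude bound: `|C(α,k+2)| ≤ α(1-α)/(k+2)`. -/
lemma genBinom_bound (α : ℝ) (h0 : 0 < α) (h1 : α < 1) :
    ∀ k : ℕ, (-1:ℝ)^(k+1) * genBinom α (k+2) ≤ α * (1-α) / ((k:ℝ)+2) := by
  intro k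
  induction k with
  | zero =>
    have : genBinom α 2 = α * (α - 1) / 2 := by
      rw [genBinom_succ' α 1, genBinom_one]; norm_num
    rw [this]; norm_num; nlinarith
  | succ k ih =>
    have h := genBinom_succ' α (k+2)
    rw [h]
    push_cast
    have hk : (0:ℝ) < (k:ℝ) + 2 := by positivity
    have hk3 : (0:ℝ) < (k:ℝ) + 3 := by positivity
    have hpos := genBinom_sign α h0 h1 (k+1)
    set x := (-1:ℝ)^(k+1) * genBinom α (k+2) with hx
    have hxpos : 0 < x := hpos
    have e1 : (-1:ℝ)^(k+1+1) * (genBinom α (k+2) * (α - ((k:ℝ)+2)) / ((k:ℝ)+2+1))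
        = x * (((k:ℝ)+2-α) / ((k:ℝ)+3)) := by
      rw [hx, pow_succ]; ring
    rw [e1]
    have hxA : x * ((k:ℝ)+2) ≤ α * (1-α) := (le_div_iff₀ hk).mp ih
    have e2 : α * (1-α) / ((k:ℝ)+1+2) = α * (1-α) / ((k:ℝ)+3) := by ring_nf
    rw [e2, ← mul_div_assoc, div_le_div_iff₀ hk3 hk3]
    nlinarith [mul_pos hxpos h0]

/-- alternating sums of a nonneg antitone sequence are nonneg. -/
lemma alt_sum_nonneg (g : ℕ → ℝ) (hpos : ∀ j, 0 ≤ g j) (hmono : ∀ j, g (j+1) ≤ g j) :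
    ∀ M, 0 ≤ ∑ j ∈ Finset.range M, (-1:ℝ)^j * g j := by
  have key : ∀ M, 0 ≤ (∑ j ∈ Finset.range M, (-1:ℝ)^j * g j) ∧
      (Odd M → g M ≤ ∑ j ∈ Finset.range M, (-1:ℝ)^j * g j) := by
    intro M
    induction M with
    | zero => simp
    | succ M ih =>
      rw [Finset.sum_range_succ]
      rcases Nat.even_or_odd M with he | ho
      · have hM : (-1:ℝ)^M = 1 := he.neg_one_pow
        constructor
        · nlinarith [ih.1, hpos M]
        · intro _
          rw [hM]
          have := hmono M
          nlinarith [ih.1]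
      · have hM : (-1:ℝ)^M = -1 := ho.neg_one_pow
        have h2 := ih.2 ho
        constructor
        · rw [hM]; nlinarith
        · intro hodd
          exfalso
          have : Even (M+1) := Nat.even_add_one.mpr (Nat.not_even_iff_odd.mpr ho)
          exact (Nat.not_even_iff_odd.mpr hodd) this
  exact fun M => (key M).1

/-- per-term telescoping identity. -/
lemma key_identity (α : ℝ) (k : ℕ) :
    genBinom α k * (1 - 2*(k:ℝ)) =
      ((1-α)/2 - k) * genBinom α k - ((1-α)/2 - ((k:ℝ)+1)) * genBinom α (k+1)
        + (1-α)*(1+α)/2 * (genBinom α k / ((k:ℝ)+1)) := by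
  have hk : ((k:ℝ)+1) ≠ 0 := by positivity
  rw [genBinom_succ' α k]
  field_simp
  ring

/-- closed form for the partial sums. -/
lemma closed_form (α : ℝ) (N : ℕ) :
    ∑ k ∈ Finset.range (N + 1), genBinom α k * (1 - 2 * (k : ℝ)) =
      (1-α)/2 + (((N:ℝ)+1) - (1-α)/2) * genBinom α (N+1)
        + (1-α)*(1+α)/2 * ∑ k ∈ Finset.range (N + 1), genBinom α k / ((k:ℝ)+1) := by
  induction N with
  | zero =>
    simp [genBinom_zero, genBinom_one]
    ring
  | succ N ih =>
    rw [Finset.sum_range_succ, ih,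
      Finset.sum_range_succ (fun k => genBinom α k / ((k:ℝ)+1)) (N+1)]
    have hk := key_identity α (N+1)
    push_cast at hk ⊢
    linarith [hk]

/-- For `0 < α < 1` and any natural `N`, `∑_{k=0}^{N} C(α,k)·(1 − 2k) > 0`;
consequently `∑_{k=0}^{N} C(α,k) > 2·∑_{k=0}^{N} C(α,k)·k`. -/
theorem binom_sum_one_sub_two_k_pos
    (α : ℝ) (h0 : 0 < α) (h1 : α < 1) (N : ℕ) :
    0 < ∑ k ∈ Finset.range (N + 1), genBinom α k * (1 - 2 * (k : ℝ)) ∧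
    2 * ∑ k ∈ Finset.range (N + 1), genBinom α k * k
      < ∑ k ∈ Finset.range (N + 1), genBinom α k := by
  have main : 0 < ∑ k ∈ Finset.range (N + 1), genBinom α k * (1 - 2 * (k : ℝ)) := by
    rw [closed_form α N]
    -- the tail sum is ≥ 1
    have htail : (1:ℝ) ≤ ∑ k ∈ Finset.range (N + 1), genBinom α k / ((k:ℝ)+1) := by
      rw [Finset.sum_range_succ' (f := fun k => genBinom α k / ((k:ℝ)+1))]
      simp only [genBinom_zero, Nat.cast_zero]
      norm_num
      have halt : 0 ≤ ∑ j ∈ Finset.range N, (-1:ℝ)^j *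
          ((-1:ℝ)^j * (genBinom α (j+1) / ((j:ℝ)+2))) := by
        apply alt_sum_nonneg
        · intro j
          have := genBinom_sign α h0 h1 j
          have h2 : (0:ℝ) < (j:ℝ)+2 := by positivity
          rw [← mul_div_assoc]
          positivity
        · intro j
          have hrec := genBinom_succ' α (j+1)
          push_cast at hrec
          have hsgn := genBinom_sign α h0 h1 j
          have h2 : (0:ℝ) < (j:ℝ)+2 := by positivity
          have h3 : (0:ℝ) < (j:ℝ)+3 := by positivity
          have e1 : (-1:ℝ)^(j+1) * (genBinom α (j+1+1) / ((j:ℝ)+1+2)) =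
              ((-1:ℝ)^j * genBinom α (j+1)) * (((j:ℝ)+1-α) / (((j:ℝ)+2)*((j:ℝ)+3))) := by
            rw [hrec, pow_succ]; field_simp; ring
          push_cast
          rw [e1]
          have hub : ((j:ℝ)+1-α) / (((j:ℝ)+2)*((j:ℝ)+3)) ≤ 1/((j:ℝ)+2) := by
            rw [div_le_div_iff₀ (by positivity) h2]
            nlinarith [Nat.cast_nonneg (α := ℝ) j]
          calc ((-1:ℝ)^j * genBinom α (j+1)) * (((j:ℝ)+1-α) / (((j:ℝ)+2)*((j:ℝ)+3)))
              ≤ ((-1:ℝ)^j * genBinom α (j+1)) * (1/((j:ℝ)+2)) := by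
                apply mul_le_mul_of_nonneg_left hub (le_of_lt hsgn)
            _ = (-1:ℝ)^j * (genBinom α (j+1) / ((j:ℝ)+2)) := by ring
      have hsq : ∀ j : ℕ, (-1:ℝ)^j * ((-1:ℝ)^j * (genBinom α (j+1) / ((j:ℝ)+2)))
          = genBinom α (j+1) / ((j:ℝ)+2) := by
        intro j
        rw [← mul_assoc, ← pow_add]
        have : Even (j + j) := ⟨j, rfl⟩
        rw [this.neg_one_pow, one_mul]
      simp only [hsq] at halt
      convert halt using 2 with j
      push_cast; ring_nf
    -- the middle term is ≥ -α(1-α)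
    have hmid : -(α*(1-α)) ≤ (((N:ℝ)+1) - (1-α)/2) * genBinom α (N+1) := by
      have hc : (0:ℝ) < ((N:ℝ)+1) - (1-α)/2 := by
        have := Nat.cast_nonneg (α := ℝ) N; nlinarith
      rcases Nat.even_or_odd N with he | ho
      · have hs := genBinom_sign α h0 h1 N
        rw [he.neg_one_pow, one_mul] at hs
        nlinarith [mul_pos h0 (by linarith : (0:ℝ) < 1 - α)]
      · obtain ⟨m, hm⟩ := ho
        have hb := genBinom_bound α h0 h1 (N-1)
        have hN1 : N - 1 + 2 = N + 1 := by omega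
        have hN2 : ((N:ℝ) - 1) + 2 = (N:ℝ) + 1 := by ring
        rw [hN1] at hb
        have hcast : ((N-1 : ℕ):ℝ) = (N:ℝ) - 1 := by
          have : 1 ≤ N := by omega
          push_cast [this]; ring
        rw [hcast, hN2] at hb
        have hodd : (-1:ℝ)^(N-1+1) = -1 := by
          have : Odd (N-1+1) := ⟨m, by omega⟩
          exact this.neg_one_pow
        rw [hodd, neg_one_mul] at hb
        -- genBinom α (N+1) ≥ -α(1-α)/(N+1), negative
        have hneg : genBinom α (N+1) ≤ 0 := by
          have hs := genBinom_sign α h0 h1 N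
          have : (-1:ℝ)^N = -1 := by
            refine Odd.neg_one_pow ⟨m, by omega⟩
          rw [this] at hs; linarith
        have hNpos : (0:ℝ) < (N:ℝ)+1 := by positivity
        have hb' : -(α*(1-α)) ≤ ((N:ℝ)+1) * genBinom α (N+1) := by
          have := (le_div_iff₀ hNpos).mp hb
          nlinarith
        nlinarith [mul_nonneg (by linarith : (0:ℝ) ≤ (1-α)/2) (neg_nonneg.mpr hneg)]
    have hcoef : (0:ℝ) ≤ (1-α)*(1+α)/2 := by nlinarith
    have hterm3 : (1-α)*(1+α)/2 ≤ (1-α)*(1+α)/2 *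
        ∑ k ∈ Finset.range (N + 1), genBinom α k / ((k:ℝ)+1) := by
      nlinarith [htail, hcoef]
    nlinarith [hmid, hterm3]
  refine ⟨main, ?_⟩
  have : ∑ k ∈ Finset.range (N + 1), genBinom α k * (1 - 2 * (k : ℝ)) =
      (∑ k ∈ Finset.range (N + 1), genBinom α k)
        - 2 * ∑ k ∈ Finset.range (N + 1), genBinom α k * k := by
    rw [Finset.mul_sum, ← Finset.sum_sub_distrib]
    apply Finset.sum_congr rfl
    intros; ring
  linarith [this ▸ main]
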